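/- arXiv:2111.09229 — 2 statements merged into one kernel-verified Lean document; each statement's English description precedes it below -/
import Mathlib

section
/- Let 0 < β ≤ 1, a ≥ 0, let (Ω, 𝓕, μ) be a probability space and X : Ω → ℝ a random variable such that for every λ ∈ ℝ the function exp(λX) is integrable and ∫_Ω e^{λX} dμ = E_β(λ²a/2). Then for every n ∈ ℕ₀ the powers of X are integrable with ∫_Ω X^{2n+1} dμ = 0 and ∫_Ω X^{2n} dμ = (2n)!/(2^n Γ(βn+1)) · a^n. -/
/-!
The moment generating function of `X` is real analytic at `0` with Taylor coefficients
`∫ X^k / k!`, while `λ ↦ E_β(λ² a/2)` has the explicit power series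
`∑ₙ (a/2)ⁿ λ²ⁿ / Γ(βn + 1)`. Two power series with the same sum near `0` have the same
coefficients, which gives all moments at once.
-/

open MeasureTheory

/-- The (real-valued) Mittag-Leffler function `E_β(x) = ∑_{n=0}^∞ x^n / Γ(βn + 1)`
for real arguments. -/
noncomputable def mittagLefflerReal (β x : ℝ) : ℝ :=
  ∑' n : ℕ, x ^ n / Real.Gamma (β * n + 1)

open ProbabilityTheory FormalMultilinearSeries

lemma hasFPowerSeriesAt_ofScalars_of_forall_hasSum {f : ℝ → ℝ} {c : ℕ → ℝ}
    (hf : ∀ y, HasSum (fun k => c k * y ^ k) (f y)) :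
    HasFPowerSeriesAt f (ofScalars ℝ c) 0 := by
  have hradius : 1 ≤ (ofScalars ℝ c).radius := by
    refine ENNReal.coe_one ▸ (ofScalars ℝ c).le_radius_of_summable ?_
    simpa [ofScalars_norm] using (hf 1).summable.abs
  refine ⟨1, hradius, one_pos, fun {y} _ => ?_⟩
  simpa [ofScalars_apply_eq, mul_comm] using hf y

lemma integral_pow_div_factorial_eq_of_hasFPowerSeriesAt_mgf {Ω : Type*} [MeasurableSpace Ω]
    {μ : Measure Ω} {X : Ω → ℝ} {c : ℕ → ℝ} (h0 : 0 ∈ interior (integrableExpSet X μ))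
    (hc : HasFPowerSeriesAt (mgf X μ) (ofScalars ℝ c) 0) (n : ℕ) :
    (∫ ω, X ω ^ n ∂μ) / n.factorial = c n := by
  have hcoeff := hc.eq_formalMultilinearSeries (hasFPowerSeriesAt_mgf h0)
  rw [ofScalars_series_eq_iff] at hcoeff
  simpa using (congrFun hcoeff n).symm

lemma mittagLefflerReal_zero (β : ℝ) : mittagLefflerReal β 0 = 1 := by
  rw [mittagLefflerReal, tsum_eq_single 0 fun n hn => by simp [hn]]
  simp

lemma summable_of_mittagLefflerReal_ne_zero {β x : ℝ} (h : mittagLefflerReal β x ≠ 0) :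
    Summable fun n : ℕ => x ^ n / Real.Gamma (β * n + 1) := by
  by_contra hs
  exact h (tsum_eq_zero_of_not_summable hs)

/-- The Taylor coefficients of `λ ↦ E_β(λ² b)` at `0`. -/
noncomputable def mittagLefflerSqCoeff (β b : ℝ) (k : ℕ) : ℝ :=
  if Even k then b ^ (k / 2) / Real.Gamma (β * (k / 2 : ℕ) + 1) else 0

section mittagLefflerSqCoeff

variable (β b : ℝ) (n : ℕ)

@[simp]
lemma mittagLefflerSqCoeff_two_mul :
    mittagLefflerSqCoeff β b (2 * n) = b ^ n / Real.Gamma (β * n + 1) := by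
  simp [mittagLefflerSqCoeff]

@[simp]
lemma mittagLefflerSqCoeff_two_mul_add_one : mittagLefflerSqCoeff β b (2 * n + 1) = 0 := by
  simp [mittagLefflerSqCoeff]

end mittagLefflerSqCoeff

lemma hasSum_mittagLefflerSqCoeff_mul_pow {β b l : ℝ}
    (hs : Summable fun n : ℕ => (l ^ 2 * b) ^ n / Real.Gamma (β * n + 1)) :
    HasSum (fun k => mittagLefflerSqCoeff β b k * l ^ k) (mittagLefflerReal β (l ^ 2 * b)) := by
  have hodd : ∀ k ∉ Set.range (2 * ·), mittagLefflerSqCoeff β b k * l ^ k = 0 := by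
    intro k hk
    have hk_odd : ¬ Even k := fun ⟨r, hr⟩ => hk ⟨r, show 2 * r = k by omega⟩
    simp [mittagLefflerSqCoeff, hk_odd]
  refine ((mul_right_injective₀ two_ne_zero).hasSum_iff hodd).mp ?_
  refine hs.hasSum.congr_fun fun n => ?_
  rw [Function.comp_apply, mittagLefflerSqCoeff_two_mul]
  ring

theorem moments_of_mittagLeffler_mgf_general {Ω : Type*} [MeasurableSpace Ω]
    (μ : Measure Ω) (β : ℝ)
    (a : ℝ) (X : Ω → ℝ)
    (hint : ∀ l : ℝ, Integrable (fun ω => Real.exp (l * X ω)) μ)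
    (hmgf : ∀ l : ℝ, ∫ ω, Real.exp (l * X ω) ∂μ = mittagLefflerReal β (l ^ 2 * a / 2)) :
    ∀ n : ℕ,
      (Integrable (fun ω => X ω ^ (2 * n + 1)) μ ∧ ∫ ω, X ω ^ (2 * n + 1) ∂μ = 0) ∧
      (Integrable (fun ω => X ω ^ (2 * n)) μ ∧
        ∫ ω, X ω ^ (2 * n) ∂μ =
          (2 * n).factorial / (2 ^ n * Real.Gamma (β * n + 1)) * a ^ n) := by
  -- `hmgf 0` reads `μ univ = E_β(0) = 1`
  have hμ : NeZero μ := ⟨fun h => by simpa [h, mittagLefflerReal_zero] using hmgf 0⟩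
  have hpow (k : ℕ) : Integrable (fun ω => X ω ^ k) μ :=
    integrable_pow_of_integrable_exp_mul one_ne_zero (hint 1) (hint (-1)) k
  have hmgf_eq : mgf X μ = fun l => mittagLefflerReal β (l ^ 2 * (a / 2)) := by
    ext l
    simpa [mgf, mul_div_assoc] using hmgf l
  -- the Mittag-Leffler series converges at `l² a/2` because its `tsum` is the positive `mgf`
  have hseries : HasFPowerSeriesAt (mgf X μ) (ofScalars ℝ (mittagLefflerSqCoeff β (a / 2))) 0 := by
    refine hmgf_eq ▸ hasFPowerSeriesAt_ofScalars_of_forall_hasSum fun l => ?_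
    refine hasSum_mittagLefflerSqCoeff_mul_pow (summable_of_mittagLefflerReal_ne_zero ?_)
    exact (congrFun hmgf_eq l ▸ mgf_pos_iff.mpr (hint l)).ne'
  have hmoment := integral_pow_div_factorial_eq_of_hasFPowerSeriesAt_mgf
    (by simp [integrableExpSet, hint]) hseries
  intro n
  refine ⟨⟨hpow _, ?_⟩, ⟨hpow _, ?_⟩⟩
  · simpa [Nat.factorial_ne_zero] using hmoment (2 * n + 1)
  · have h := hmoment (2 * n)
    rw [mittagLefflerSqCoeff_two_mul, div_eq_iff (by positivity)] at h
    rw [h, div_pow]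
    ring

/-- If a random variable `X` has moment generating function `λ ↦ E_β(λ²a/2)`, then its
odd moments vanish and its even moments are `∫ X^{2n} = (2n)!/(2^n Γ(βn+1)) · a^n`. -/
theorem moments_of_mittagLeffler_mgf {Ω : Type*} [MeasurableSpace Ω]
    (μ : Measure Ω) [IsProbabilityMeasure μ] (β : ℝ) (hβ : 0 < β) (hβ1 : β ≤ 1)
    (a : ℝ) (ha : 0 ≤ a) (X : Ω → ℝ)
    (hint : ∀ l : ℝ, Integrable (fun ω => Real.exp (l * X ω)) μ)
    (hmgf : ∀ l : ℝ, ∫ ω, Real.exp (l * X ω) ∂μ = mittagLefflerReal β (l ^ 2 * a / 2)) :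
    ∀ n : ℕ,
      (Integrable (fun ω => X ω ^ (2 * n + 1)) μ ∧ ∫ ω, X ω ^ (2 * n + 1) ∂μ = 0) ∧
      (Integrable (fun ω => X ω ^ (2 * n)) μ ∧
        ∫ ω, X ω ^ (2 * n) ∂μ =
          (2 * n).factorial / (2 ^ n * Real.Gamma (β * n + 1)) * a ^ n) :=
  moments_of_mittagLeffler_mgf_general μ β a X hint hmgf
end

section
/- Let 0 < β ≤ 1, let a, b ≥ 0 and c ∈ ℝ, let (Ω, 𝓕, μ) be a probability space and X, Y : Ω → ℝ random variables such that for all u, v ∈ ℝ the function exp(uX + vY) is integrable and ∫_Ω e^{uX+vY} dμ = E_β((1/2)(u²a + 2uvc + v²b)). Then X and Y are square integrable, ∫_Ω X dμ = ∫_Ω Y dμ = 0, and ∫_Ω X·Y dμ = c / Γ(β+1). -/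
/-!
For fixed `u, v` the moment generating function of `Z = uX + vY` is `t ↦ E_β(s t²)` with
`s = (u²a + 2uvc + v²b)/2`, finite on all of `ℝ`. So `Z` has moments of all orders, and they are
the derivatives of its moment generating function at `0`: `E Z = 0` and
`E Z² = 2 s E_β'(0) = 2 s / Γ(β+1)`. Here `E_β` is analytic at `0` because its Taylor
coefficients `1/Γ(βn+1)` are bounded. Polarization, `E[XY] = (E(X+Y)² - E(X-Y)²)/4`, then gives
the covariance.
-/

open MeasureTheory

open Filter Topology FormalMultilinearSeries ProbabilityTheory

lemma Real.half_le_Gamma_of_one_le {y : ℝ} (hy : 1 ≤ y) : 1 / 2 ≤ Real.Gamma y := by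
  rcases le_total 2 y with h2 | h2
  · calc 1 / 2 ≤ Real.Gamma 2 := by norm_num [Real.Gamma_two]
      _ ≤ Real.Gamma y := Real.Gamma_strictMonoOn_Ici.monotoneOn Set.self_mem_Ici h2 h2
  · have hΓ : 1 ≤ Real.Gamma (y + 1) := by
      simpa [Real.Gamma_two] using Real.Gamma_strictMonoOn_Ici.monotoneOn Set.self_mem_Ici
        (show y + 1 ∈ Set.Ici 2 by simp; linarith) (by linarith)
    rw [Real.Gamma_add_one (by linarith)] at hΓ
    nlinarith [Real.Gamma_pos_of_pos (by linarith : 0 < y)]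

noncomputable def mittagLefflerSeries (β : ℝ) : FormalMultilinearSeries ℝ ℝ ℝ :=
  ofScalars ℝ fun n : ℕ => (Real.Gamma (β * n + 1))⁻¹

lemma mittagLefflerReal_eq_sum (β : ℝ) : mittagLefflerReal β = (mittagLefflerSeries β).sum := by
  ext x
  simp only [mittagLefflerReal, mittagLefflerSeries, ← ofScalarsSum.eq_def, ofScalars_sum_eq,
    smul_eq_mul, div_eq_inv_mul]

lemma one_le_radius_mittagLefflerSeries {β : ℝ} (hβ : 0 ≤ β) :
    1 ≤ (mittagLefflerSeries β).radius := by
  refine mod_cast le_radius_of_bound _ 2 fun n => ?_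
  have hΓ : 1 / 2 ≤ Real.Gamma (β * n + 1) :=
    Real.half_le_Gamma_of_one_le (by nlinarith [(Nat.cast_nonneg n : (0 : ℝ) ≤ n)])
  rw [mittagLefflerSeries, ofScalars_norm, Real.norm_eq_abs, abs_inv, abs_of_pos (by linarith),
    NNReal.coe_one, one_pow, mul_one]
  calc (Real.Gamma (β * n + 1))⁻¹ ≤ (1 / 2)⁻¹ := inv_anti₀ (by norm_num) hΓ
    _ = 2 := by norm_num

lemma hasFPowerSeriesAt_mittagLefflerReal {β : ℝ} (hβ : 0 ≤ β) :
    HasFPowerSeriesAt (mittagLefflerReal β) (mittagLefflerSeries β) 0 := by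
  rw [mittagLefflerReal_eq_sum]
  exact ((mittagLefflerSeries β).hasFPowerSeriesOnBall
    (zero_lt_one.trans_le (one_le_radius_mittagLefflerSeries hβ))).hasFPowerSeriesAt

lemma deriv_mittagLefflerReal_zero {β : ℝ} (hβ : 0 ≤ β) :
    deriv (mittagLefflerReal β) 0 = (Real.Gamma (β + 1))⁻¹ := by
  simp [(hasFPowerSeriesAt_mittagLefflerReal hβ).deriv, mittagLefflerSeries]

section EvenComposition

variable {h : ℝ → ℝ} (s : ℝ)

lemma deriv_comp_mul_sq_zero (hh : DifferentiableAt ℝ h 0) :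
    deriv (fun t => h (s * t ^ 2)) 0 = 0 := by
  have hsq : HasDerivAt (fun t : ℝ => s * t ^ 2) 0 0 := by
    simpa using (hasDerivAt_pow 2 (0 : ℝ)).const_mul s
  simpa [Function.comp_def] using (hh.hasDerivAt.comp_of_eq 0 hsq (by simp)).deriv

lemma iteratedDeriv_two_comp_mul_sq_zero (hh : AnalyticAt ℝ h 0) :
    iteratedDeriv 2 (fun t => h (s * t ^ 2)) 0 = 2 * s * deriv h 0 := by
  have hsq : ∀ t : ℝ, HasDerivAt (fun t => s * t ^ 2) (s * (2 * t)) t := fun t => by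
    simpa using (hasDerivAt_pow 2 t).const_mul s
  have hsq_tendsto : Tendsto (fun t : ℝ => s * t ^ 2) (𝓝 0) (𝓝 0) := by
    simpa using ((continuous_pow 2).const_mul s).tendsto (0 : ℝ)
  have hderiv : deriv (fun t => h (s * t ^ 2)) =ᶠ[𝓝 0]
      fun t => deriv h (s * t ^ 2) * (s * (2 * t)) := by
    filter_upwards [hsq_tendsto.eventually hh.eventually_analyticAt] with t ht
    exact (ht.differentiableAt.hasDerivAt.comp t (hsq t)).deriv
  have houter : HasDerivAt (fun t => deriv h (s * t ^ 2)) (deriv (deriv h) 0 * 0) 0 :=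
    hh.deriv.differentiableAt.hasDerivAt.comp_of_eq 0 (by simpa using hsq 0) (by simp)
  have hinner : HasDerivAt (fun t : ℝ => s * (2 * t)) (s * 2) 0 := by
    simpa using ((hasDerivAt_id (0 : ℝ)).const_mul 2).const_mul s
  rw [iteratedDeriv_succ, iteratedDeriv_one, hderiv.deriv_eq]
  exact (houter.mul hinner).deriv.trans (by simp; ring)

end EvenComposition

section Moments

variable {Ω : Type*} [MeasurableSpace Ω] {μ : Measure Ω}

lemma memLp_two_and_moments_of_mgf_eq_comp_mul_sq {Z : Ω → ℝ} {h : ℝ → ℝ}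
    (hh : AnalyticAt ℝ h 0) {s : ℝ} (hZ : ∀ t, Integrable (fun ω => Real.exp (t * Z ω)) μ)
    (hmgf : mgf Z μ = fun t => h (s * t ^ 2)) :
    MemLp Z 2 μ ∧ ∫ ω, Z ω ∂μ = 0 ∧ ∫ ω, Z ω ^ 2 ∂μ = 2 * s * deriv h 0 := by
  have h0 : (0 : ℝ) ∈ interior (integrableExpSet Z μ) := by
    rw [Set.eq_univ_of_forall (s := integrableExpSet Z μ) hZ, interior_univ]
    trivial
  refine ⟨mod_cast memLp_of_mem_interior_integrableExpSet h0 2, ?_, ?_⟩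
  · rw [← deriv_mgf_zero h0, hmgf, deriv_comp_mul_sq_zero s hh.differentiableAt]
  · simpa [hmgf, iteratedDeriv_two_comp_mul_sq_zero s hh] using
      (iteratedDeriv_mgf_zero h0 2).symm

lemma memLp_two_and_moments_of_mgf_eq_mittagLefflerReal {Z : Ω → ℝ} {β s : ℝ} (hβ : 0 ≤ β)
    (hZ : ∀ t, Integrable (fun ω => Real.exp (t * Z ω)) μ)
    (hmgf : mgf Z μ = fun t => mittagLefflerReal β (s * t ^ 2)) :
    MemLp Z 2 μ ∧ ∫ ω, Z ω ∂μ = 0 ∧ ∫ ω, Z ω ^ 2 ∂μ = 2 * s / Real.Gamma (β + 1) := by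
  simpa [deriv_mittagLefflerReal_zero hβ, div_eq_mul_inv] using
    memLp_two_and_moments_of_mgf_eq_comp_mul_sq
      (hasFPowerSeriesAt_mittagLefflerReal hβ).analyticAt hZ hmgf

lemma integral_mul_eq_of_memLp_two {X Y : Ω → ℝ} (hX : MemLp X 2 μ) (hY : MemLp Y 2 μ) :
    ∫ ω, X ω * Y ω ∂μ = (∫ ω, (X ω + Y ω) ^ 2 ∂μ - ∫ ω, (X ω - Y ω) ^ 2 ∂μ) / 4 := by
  have hpolar : ∀ ω, X ω * Y ω = ((X ω + Y ω) ^ 2 - (X ω - Y ω) ^ 2) / 4 := fun ω => by ring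
  simp_rw [hpolar]
  rw [integral_div]
  exact congrArg (· / 4) (integral_sub (hX.add hY).integrable_sq (hX.sub hY).integrable_sq)

end Moments

theorem covariance_of_mittagLeffler_mgf_general {Ω : Type*} [MeasurableSpace Ω]
    (μ : Measure Ω) (β : ℝ) (hβ : 0 < β)
    (a b : ℝ) (c : ℝ) (X Y : Ω → ℝ)
    (hint : ∀ u v : ℝ, Integrable (fun ω => Real.exp (u * X ω + v * Y ω)) μ)
    (hmgf : ∀ u v : ℝ, ∫ ω, Real.exp (u * X ω + v * Y ω) ∂μ
      = mittagLefflerReal β ((1 / 2) * (u ^ 2 * a + 2 * u * v * c + v ^ 2 * b))) :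
    MemLp X 2 μ ∧ MemLp Y 2 μ ∧
      (∫ ω, X ω ∂μ) = 0 ∧ (∫ ω, Y ω ∂μ) = 0 ∧
      ∫ ω, X ω * Y ω ∂μ = c / Real.Gamma (β + 1) := by
  have hlin : ∀ u v t ω, t * (u * X ω + v * Y ω) = t * u * X ω + t * v * Y ω := by
    intros; ring
  have hcomb : ∀ u v, MemLp (fun ω => u * X ω + v * Y ω) 2 μ ∧
      ∫ ω, u * X ω + v * Y ω ∂μ = 0 ∧
      ∫ ω, (u * X ω + v * Y ω) ^ 2 ∂μ
        = (u ^ 2 * a + 2 * u * v * c + v ^ 2 * b) / Real.Gamma (β + 1) := by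
    intro u v
    refine (memLp_two_and_moments_of_mgf_eq_mittagLefflerReal
      (s := (1 / 2) * (u ^ 2 * a + 2 * u * v * c + v ^ 2 * b)) hβ.le (fun t => ?_) ?_).imp_right
      (And.imp_right fun h => h.trans (by ring))
    · simpa only [hlin] using hint (t * u) (t * v)
    · ext t
      simp only [mgf, hlin, hmgf]
      ring_nf
  obtain ⟨hX, hXmean, -⟩ := by simpa using hcomb 1 0
  obtain ⟨hY, hYmean, -⟩ := by simpa using hcomb 0 1
  have hsum := (hcomb 1 1).2.2
  have hdiff := (hcomb 1 (-1)).2.2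
  simp only [one_mul, neg_one_mul, ← sub_eq_add_neg] at hsum hdiff
  refine ⟨hX, hY, hXmean, hYmean, ?_⟩
  rw [integral_mul_eq_of_memLp_two hX hY, hsum, hdiff]
  ring

/-- If a pair `(X, Y)` of random variables has joint moment generating function
`(u,v) ↦ E_β((1/2)(u²a + 2uvc + v²b))`, then `X` and `Y` are square integrable,
centered, and `∫ X·Y = c / Γ(β+1)`. -/
theorem covariance_of_mittagLeffler_mgf {Ω : Type*} [MeasurableSpace Ω]
    (μ : Measure Ω) [IsProbabilityMeasure μ] (β : ℝ) (hβ : 0 < β) (hβ1 : β ≤ 1)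
    (a b : ℝ) (ha : 0 ≤ a) (hb : 0 ≤ b) (c : ℝ) (X Y : Ω → ℝ)
    (hint : ∀ u v : ℝ, Integrable (fun ω => Real.exp (u * X ω + v * Y ω)) μ)
    (hmgf : ∀ u v : ℝ, ∫ ω, Real.exp (u * X ω + v * Y ω) ∂μ
      = mittagLefflerReal β ((1 / 2) * (u ^ 2 * a + 2 * u * v * c + v ^ 2 * b))) :
    MemLp X 2 μ ∧ MemLp Y 2 μ ∧
      (∫ ω, X ω ∂μ) = 0 ∧ (∫ ω, Y ω ∂μ) = 0 ∧
      ∫ ω, X ω * Y ω ∂μ = c / Real.Gamma (β + 1) :=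
  covariance_of_mittagLeffler_mgf_general μ β hβ a b c X Y hint hmgf
end
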